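/- Let K be a Mercer kernel on Θ with RKHS H_K, φ : H_K → ℝ^N a vector of bounded linear functionals with invertible Gram matrix A = K(φ,φ), F : ℝ^N → ℝ^O a (possibly nonlinear) map, λ > 0, and o ∈ ℝ^O. If z̄ ∈ ℝ^N minimizes z ↦ zᵀ A^{-1} z + λ^{-2}‖F(z) − o‖₂², then ū(x) = K(x,φ) A^{-1} z̄ minimizes u ↦ ‖u‖_K² + λ^{-2}‖F(φ(u)) − o‖₂² over H_K. -/

import Mathlib

open scoped RealInnerProductSpace BigOperators

/-- Representer theorem for nonlinear kernel regression (Prop. 2.3 of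
Chen et al.).  `H` is the RKHS of a Mercer kernel modeled via the feature
map `ev : Θ → H` (`ev x = K(x,·)`, `u(x) = ⟪u, ev x⟫`); `r i` is the
Riesz representer of `φ i`; `A = K(φ,φ)` is the invertible Gram matrix.
If `z̄` minimizes `z ↦ zᵀ A⁻¹ z + λ⁻²‖F(z) − o‖₂²` over `ℝ^N`, then
`ū(x) = K(x,φ) A⁻¹ z̄` minimizes `u ↦ ‖u‖_K² + λ⁻²‖F(φ(u)) − o‖₂²`
over `H`. -/
theorem stmt2
    {H : Type*} [NormedAddCommGroup H] [InnerProductSpace ℝ H] [CompleteSpace H]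
    {Θ : Type*} (ev : Θ → H)
    (N O : ℕ) (φ : Fin N → (H →L[ℝ] ℝ))
    (r : Fin N → H) (hr : ∀ i u, φ i u = ⟪u, r i⟫)
    (A : Matrix (Fin N) (Fin N) ℝ)
    (hA : ∀ i j, A i j = φ i (r j))
    (hAinv : IsUnit A.det)
    (F : (Fin N → ℝ) → (Fin O → ℝ))
    (lam : ℝ) (hlam : 0 < lam)
    (o : Fin O → ℝ)
    (zbar : Fin N → ℝ)
    (hzbar : ∀ z : Fin N → ℝ,
      dotProduct zbar (A⁻¹.mulVec zbar) + lam⁻¹ ^ 2 * ∑ i, (F zbar i - o i) ^ 2 ≤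
      dotProduct z (A⁻¹.mulVec z) + lam⁻¹ ^ 2 * ∑ i, (F z i - o i) ^ 2)
    (ubar : H) (hubar : ubar = ∑ j, (A⁻¹.mulVec zbar) j • r j) :
    (∀ x : Θ, ⟪ubar, ev x⟫ = ∑ i, φ i (ev x) * (A⁻¹.mulVec zbar) i) ∧
    (∀ u : H,
      ‖ubar‖ ^ 2 + lam⁻¹ ^ 2 * ∑ i, (F (fun j => φ j ubar) i - o i) ^ 2 ≤
      ‖u‖ ^ 2 + lam⁻¹ ^ 2 * ∑ i, (F (fun j => φ j u) i - o i) ^ 2) := by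
  have hsum : ∀ (c : Fin N → ℝ) (w : H),
      ⟪∑ j, c j • r j, w⟫ = ∑ j, c j * ⟪r j, w⟫ := by
    intro c w
    rw [sum_inner]
    simp [real_inner_smul_left]
  have hAB : A * A⁻¹ = 1 := Matrix.mul_nonsing_inv A hAinv
  -- φ applied to combinations with coefficients B w gives back w
  have hphi : ∀ (w : Fin N → ℝ) (i : Fin N),
      (⟪∑ j, (A⁻¹.mulVec w) j • r j, r i⟫ : ℝ) = w i := by
    intro w i
    rw [hsum]
    have h1 : ∀ j, (⟪r j, r i⟫ : ℝ) = A i j := by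
      intro j; rw [hA, hr]
    calc (∑ j, (A⁻¹.mulVec w) j * ⟪r j, r i⟫)
        = ∑ j, A i j * (A⁻¹.mulVec w) j := by
          refine Finset.sum_congr rfl fun j _ => ?_
          rw [h1, mul_comm]
      _ = (A.mulVec (A⁻¹.mulVec w)) i := rfl
      _ = w i := by rw [Matrix.mulVec_mulVec, hAB, Matrix.one_mulVec]
  -- key inequality for arbitrary u
  have key : ∀ u : H,
      dotProduct (fun i => φ i u) (A⁻¹.mulVec fun i => φ i u) ≤ ‖u‖ ^ 2 := by
    intro u
    set z : Fin N → ℝ := fun i => φ i u with hz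
    set v : H := ∑ j, (A⁻¹.mulVec z) j • r j with hv
    have hvu : ⟪v, u⟫ = dotProduct (A⁻¹.mulVec z) z := by
      rw [hv, hsum]
      refine Finset.sum_congr rfl fun j _ => ?_
      rw [real_inner_comm, ← hr]
    have hvv : ⟪v, v⟫ = dotProduct (A⁻¹.mulVec z) z := by
      rw [hv, hsum]
      refine Finset.sum_congr rfl fun j _ => ?_
      rw [real_inner_comm, ← hv, hphi]
    have h0 : (0:ℝ) ≤ ⟪u - v, u - v⟫ := real_inner_self_nonneg
    have hexp : ⟪u - v, u - v⟫
        = ‖u‖ ^ 2 - dotProduct (A⁻¹.mulVec z) z := by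
      have huv : ⟪u, v⟫ = dotProduct (A⁻¹.mulVec z) z := by
        rw [real_inner_comm]; exact hvu
      rw [inner_sub_sub_self, hvv, hvu, huv, real_inner_self_eq_norm_sq]
      ring
    have := hexp ▸ h0
    have hcomm : dotProduct z (A⁻¹.mulVec z)
        = dotProduct (A⁻¹.mulVec z) z := dotProduct_comm _ _
    rw [hcomm]
    linarith
  -- φ of ubar is zbar
  have hphibar : (fun j => φ j ubar) = zbar := by
    funext i
    rw [hr, hubar, hphi]
  have hnormbar : ‖ubar‖ ^ 2 = dotProduct zbar (A⁻¹.mulVec zbar) := by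
    have h1 : ⟪ubar, ubar⟫ = dotProduct (A⁻¹.mulVec zbar) zbar := by
      conv_lhs => rw [hubar, hsum]
      refine Finset.sum_congr rfl fun j _ => ?_
      rw [real_inner_comm, hphi]
    rw [← real_inner_self_eq_norm_sq, h1, dotProduct_comm]
  constructor
  · intro x
    rw [hubar, hsum]
    refine Finset.sum_congr rfl fun j _ => ?_
    rw [hr j (ev x), real_inner_comm (ev x)]
    ring
  · intro u
    calc ‖ubar‖ ^ 2 + lam⁻¹ ^ 2 * ∑ i, (F (fun j => φ j ubar) i - o i) ^ 2
        = dotProduct zbar (A⁻¹.mulVec zbar)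
            + lam⁻¹ ^ 2 * ∑ i, (F zbar i - o i) ^ 2 := by rw [hnormbar, hphibar]
      _ ≤ dotProduct (fun i => φ i u) (A⁻¹.mulVec fun i => φ i u)
            + lam⁻¹ ^ 2 * ∑ i, (F (fun j => φ j u) i - o i) ^ 2 := hzbar _
      _ ≤ ‖u‖ ^ 2 + lam⁻¹ ^ 2 * ∑ i, (F (fun j => φ j u) i - o i) ^ 2 := by
          have := key u; linarith
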